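/- arXiv:1709.08701 — 2 statements merged into one kernel-verified Lean document; each statement's English description precedes it below -/
import Mathlib

section
/- Let I = I(C_{2n+1}) be the edge ideal of the odd cycle C_{2n+1}. Then I^(t) = I^t for all t with 1 ≤ t ≤ n. -/
open MvPolynomial

noncomputable section

/-- The ideal generated by the variables indexed by `S`. -/
def varIdeal (K : Type*) [Field K] (N : ℕ) (S : Finset (Fin N)) :
    Ideal (MvPolynomial (Fin N) K) :=
  Ideal.span ((fun i => (X i : MvPolynomial (Fin N) K)) '' S)

/-- The edge ideal of a graph `G`, generated by `X i * X j` for edges `{i, j}`. -/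
def edgeIdeal (K : Type*) [Field K] {N : ℕ} (G : SimpleGraph (Fin N)) :
    Ideal (MvPolynomial (Fin N) K) :=
  Ideal.span {p | ∃ i j, G.Adj i j ∧ p = X i * X j}

/-- `S` is a vertex cover of `G`: every edge meets `S`. -/
def IsVertexCover {N : ℕ} (G : SimpleGraph (Fin N)) (S : Finset (Fin N)) : Prop :=
  ∀ ⦃i j : Fin N⦄, G.Adj i j → i ∈ S ∨ j ∈ S

/-- `S` is a minimal vertex cover of `G`. -/
def IsMinVertexCover {N : ℕ} (G : SimpleGraph (Fin N)) (S : Finset (Fin N)) : Prop :=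
  IsVertexCover G S ∧ ∀ T ⊂ S, ¬ IsVertexCover G T

/-- The `t`-th symbolic power of the edge ideal of `G`:
the intersection of the `t`-th powers of the minimal vertex cover primes. -/
def symbolicPower (K : Type*) [Field K] {N : ℕ} (G : SimpleGraph (Fin N)) (t : ℕ) :
    Ideal (MvPolynomial (Fin N) K) :=
  ⨅ (S : Finset (Fin N)) (_ : IsMinVertexCover G S), varIdeal K N S ^ t

/-- The cycle graph on `Fin m`, with edges `{i, i+1 mod m}`. -/
def cycleGraph (m : ℕ) : SimpleGraph (Fin m) :=
  SimpleGraph.fromRel (fun i j => (j : ℕ) = ((i : ℕ) + 1) % m)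

/-- The set `L(t)` of monomials of degree at least `2t` whose weight with respect to every
minimal vertex cover is at least `t`. -/
def Lset (K : Type*) [Field K] {N : ℕ} (G : SimpleGraph (Fin N)) (t : ℕ) :
    Set (MvPolynomial (Fin N) K) :=
  {p | ∃ a : Fin N →₀ ℕ, p = monomial a 1 ∧ 2 * t ≤ ∑ i, a i ∧
    ∀ S : Finset (Fin N), IsMinVertexCover G S → t ≤ ∑ i ∈ S, a i}

/-- The set `D(t)` of monomials of degree less than `2t` whose weight with respect to every
minimal vertex cover is at least `t`. -/
def Dset (K : Type*) [Field K] {N : ℕ} (G : SimpleGraph (Fin N)) (t : ℕ) :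
    Set (MvPolynomial (Fin N) K) :=
  {p | ∃ a : Fin N →₀ ℕ, p = monomial a 1 ∧ (∑ i, a i) < 2 * t ∧
    ∀ S : Finset (Fin N), IsMinVertexCover G S → t ≤ ∑ i ∈ S, a i}

/-- `α(J)`: the least total degree of a nonzero polynomial in `J`. -/
def alphaDeg {K : Type*} [Field K] {N : ℕ} (J : Ideal (MvPolynomial (Fin N) K)) : ℕ :=
  sInf {d | ∃ f ∈ J, f ≠ 0 ∧ f.totalDegree = d}

/-- The symbolic defect: the minimal number of generators one must add to `I(G)^t`
to obtain the symbolic power `I(G)^(t)`. -/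
def sdefect (K : Type*) [Field K] {N : ℕ} (G : SimpleGraph (Fin N)) (t : ℕ) : ℕ :=
  sInf {c | ∃ F : Finset (MvPolynomial (Fin N) K), F.card = c ∧
    symbolicPower K G t = edgeIdeal K G ^ t + Ideal.span (F : Set (MvPolynomial (Fin N) K))}

/-- The graph consisting of the odd cycle on vertices `0, …, 2n` (that is,
`x_1, …, x_{2n+1}`) together with one extra vertex `2n+1` (that is, `x_{2n+2}`)
joined to vertex `0` (that is, `x_1`) by an edge. -/
def appendedCycle (n : ℕ) : SimpleGraph (Fin (2 * n + 2)) :=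
  SimpleGraph.fromRel (fun i j =>
    ((j : ℕ) = (i : ℕ) + 1 ∧ (j : ℕ) ≤ 2 * n) ∨
    ((i : ℕ) = 2 * n ∧ (j : ℕ) = 0) ∨
    ((i : ℕ) = 0 ∧ (j : ℕ) = 2 * n + 1))

/-!
A polynomial lies in `I^(t)` iff each of its monomials `x^a` has weight `∑_{i ∈ S} a_i ≥ t` on
every (minimal) vertex cover `S`, and it lies in `I^t` if each `x^a` is divisible by a product of
`t` edges. So it suffices to peel edges off `x^a` one at a time while the cover-weight bound drops
by exactly one. An edge `{j, j+1}` with `a_j, a_{j+1} ≥ 1` can be peeled as long as every cover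
containing both of its ends has weight `≥ t + 1`. If all `a_i ≥ 1`, every edge qualifies, since a
cover of `C_{2n+1}` has at least `n + 1 ≥ t + 1` vertices. Otherwise some edge has both ends
positive (else the zeros of `a` form a cover of weight `0`), and walking back along the cycle to a
zero of `a` gives such an edge `{j, j+1}` with `a_{j-1} = 0`: replacing `j` by `j - 1` in a cover
containing `j` and `j+1` gives a cover lighter by `a_j ≥ 1`.
-/

open Finset Finsupp

theorem Finsupp.single_add_single_le {α : Type*} {u v : α} {a : α →₀ ℕ} (huv : u ≠ v)
    (hu : a u ≠ 0) (hv : a v ≠ 0) : single u 1 + single v 1 ≤ a := by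
  classical
  intro i
  simp only [coe_add, Pi.add_apply, single_apply]
  split_ifs with hui hvi hvi
  · exact absurd (hui.trans hvi.symm) huv
  · subst hui; omega
  · subst hvi; omega
  · exact Nat.zero_le _

namespace MvPolynomial

variable {σ R : Type*} [CommSemiring R]

theorem mem_of_forall_monomial_one_mem {I : Ideal (MvPolynomial σ R)} {f : MvPolynomial σ R}
    (h : ∀ a ∈ f.support, monomial a 1 ∈ I) : f ∈ I := by
  rw [f.as_sum]
  refine I.sum_mem fun a ha => ?_
  simpa [C_mul_monomial] using I.mul_mem_left (C (f.coeff a)) (h a ha)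

theorem monomial_sum_mem_pow {ι : Type*} {I : Ideal (MvPolynomial σ R)} {e : ι → σ →₀ ℕ}
    (l : Multiset ι) (he : ∀ i ∈ l, monomial (e i) 1 ∈ I) :
    monomial (l.map e).sum (1 : R) ∈ I ^ Multiset.card l := by
  induction l using Multiset.induction with
  | empty => simp
  | cons i l ih =>
    rw [Multiset.map_cons, Multiset.sum_cons, Multiset.card_cons, pow_succ', ← one_mul (1 : R),
      ← monomial_mul]
    exact Ideal.mul_mem_mul (he i (Multiset.mem_cons_self i l))
      (ih fun j hj => he j (Multiset.mem_cons_of_mem hj))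

theorem monomial_mem_pow_of_sum_le {ι : Type*} {I : Ideal (MvPolynomial σ R)} {e : ι → σ →₀ ℕ}
    {l : Multiset ι} (he : ∀ i ∈ l, monomial (e i) 1 ∈ I) {a : σ →₀ ℕ} (hle : (l.map e).sum ≤ a)
    (c : R) : monomial a c ∈ I ^ Multiset.card l := by
  rw [← tsub_add_cancel_of_le hle, ← mul_one c, ← monomial_mul]
  exact Ideal.mul_mem_left _ _ (monomial_sum_mem_pow l he)

end MvPolynomial

section EdgeIdeal

variable {K : Type*} [Field K] {N : ℕ} {G : SimpleGraph (Fin N)}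

theorem IsVertexCover.exists_isMinVertexCover_subset {S : Finset (Fin N)}
    (hS : IsVertexCover G S) : ∃ T ⊆ S, IsMinVertexCover G T := by
  obtain ⟨T, hTS, hT⟩ := exists_minimal_le_of_wellFoundedLT (IsVertexCover G) S hS
  exact ⟨T, hTS, minimal_iff_forall_lt.mp hT⟩

theorem IsVertexCover.insert_erase {S : Finset (Fin N)} {j u : Fin N} (hS : IsVertexCover G S)
    (hj : ∀ v, G.Adj j v → v ≠ u → v ∈ S) : IsVertexCover G (insert u (S.erase j)) := by
  have hcovered : ∀ ⦃v w⦄, G.Adj v w → v ∈ S → v ∈ insert u (S.erase j) ∨ w ∈ insert u (S.erase j) := by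
    intro v w hvw hv
    by_cases hvj : v = j
    · subst hvj
      by_cases hwu : w = u
      · exact Or.inr (mem_insert.mpr (Or.inl hwu))
      · exact Or.inr (mem_insert_of_mem (mem_erase.mpr ⟨hvw.ne.symm, hj w hvw hwu⟩))
    · exact Or.inl (mem_insert_of_mem (mem_erase.mpr ⟨hvj, hv⟩))
  intro v w hvw
  exact (hS hvw).elim (hcovered hvw) fun hw => (hcovered hvw.symm hw).symm

theorem edgeIdeal_le_varIdeal {S : Finset (Fin N)} (hS : IsVertexCover G S) :
    edgeIdeal K G ≤ varIdeal K N S := by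
  refine Ideal.span_le.mpr ?_
  rintro _ ⟨i, j, hij, rfl⟩
  rcases hS hij with hi | hj
  · exact Ideal.mul_mem_right _ _ (Ideal.subset_span ⟨i, hi, rfl⟩)
  · exact Ideal.mul_mem_left _ _ (Ideal.subset_span ⟨j, hj, rfl⟩)

theorem edgeIdeal_pow_le_symbolicPower (t : ℕ) :
    edgeIdeal K G ^ t ≤ symbolicPower K G t :=
  le_iInf₂ fun _ hS => Ideal.pow_right_mono (edgeIdeal_le_varIdeal hS.1) t

theorem le_sum_of_mem_varIdeal_pow {S : Finset (Fin N)} {t : ℕ} {f : MvPolynomial (Fin N) K}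
    (hf : f ∈ varIdeal K N S ^ t) {a : Fin N →₀ ℕ} (ha : a ∈ f.support) :
    t ≤ ∑ i ∈ S, a i := by
  classical
  induction t generalizing f a with
  | zero => exact Nat.zero_le _
  | succ t ih =>
    rw [pow_succ] at hf
    refine Submodule.mul_induction_on (C := fun p => ∀ a ∈ p.support, t + 1 ≤ ∑ i ∈ S, a i)
      hf (fun g hg h hh a ha => ?_) (fun g h hg hh a ha => ?_) a ha
    · obtain ⟨b, hb, c, hc, rfl⟩ := Finset.mem_add.mp (support_mul g h ha)
      obtain ⟨i, hi, hci⟩ := (mem_ideal_span_X_image.mp hh) c hc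
      have hc1 : 1 ≤ ∑ i ∈ S, c i := (Nat.one_le_iff_ne_zero.mpr hci).trans
        (Finset.single_le_sum (fun _ _ => Nat.zero_le _) hi)
      simpa [Finset.sum_add_distrib] using Nat.add_le_add (ih hg hb) hc1
    · rcases Finset.mem_union.mp (MvPolynomial.support_add ha) with hb | hb
      exacts [hg a hb, hh a hb]

end EdgeIdeal

section CoverWeight

variable {K : Type*} [Field K] {N : ℕ} {G : SimpleGraph (Fin N)}

def LeCoverWeight (G : SimpleGraph (Fin N)) (t : ℕ) (a : Fin N →₀ ℕ) : Prop :=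
  ∀ S, IsVertexCover G S → t ≤ ∑ i ∈ S, a i

theorem leCoverWeight_of_mem_symbolicPower {t : ℕ} {f : MvPolynomial (Fin N) K}
    (hf : f ∈ symbolicPower K G t) {a : Fin N →₀ ℕ} (ha : a ∈ f.support) :
    LeCoverWeight G t a := by
  intro S hS
  obtain ⟨T, hTS, hT⟩ := hS.exists_isMinVertexCover_subset
  have hfT : f ∈ varIdeal K N T ^ t := Ideal.mem_iInf.mp (Ideal.mem_iInf.mp hf T) hT
  exact (le_sum_of_mem_varIdeal_pow hfT ha).trans (Finset.sum_le_sum_of_subset hTS)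

variable {t : ℕ} {a : Fin N →₀ ℕ}

theorem LeCoverWeight.exists_adj_ne_zero (h : LeCoverWeight G t a) (ht : t ≠ 0) :
    ∃ i j, G.Adj i j ∧ a i ≠ 0 ∧ a j ≠ 0 := by
  classical
  by_contra! hne
  have hzero : IsVertexCover G (univ.filter fun i => a i = 0) := fun i j hij => by
    simpa [or_iff_not_imp_left] using hne i j hij
  have := h _ hzero
  rw [Finset.sum_eq_zero fun i hi => (Finset.mem_filter.mp hi).2] at this
  omega

theorem LeCoverWeight.tsub_single_add_single {u v : Fin N} (h : LeCoverWeight G (t + 1) a)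
    (hle : single u 1 + single v 1 ≤ a)
    (hboth : ∀ S, IsVertexCover G S → u ∈ S → v ∈ S → t + 2 ≤ ∑ i ∈ S, a i) :
    LeCoverWeight G t (a - (single u 1 + single v 1)) := by
  classical
  intro S hS
  set e : Fin N →₀ ℕ := single u 1 + single v 1
  have hsplit : ∑ i ∈ S, a i
      = ∑ i ∈ S, (a - e) i + ((if u ∈ S then 1 else 0) + if v ∈ S then 1 else 0) := by
    rw [← Finset.sum_congr rfl fun i _ => tsub_add_cancel_of_le (hle i), Finset.sum_add_distrib]
    simp [e, Finset.sum_add_distrib, single_apply]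
  by_cases hu : u ∈ S <;> by_cases hv : v ∈ S
  · have := hboth S hS hu hv
    simp only [hu, hv, if_true] at hsplit
    omega
  all_goals
    have := h S hS
    simp only [hu, hv, if_true, if_false] at hsplit
    omega

end CoverWeight

section Cycle

variable {m : ℕ} [NeZero m]

open Fin.NatCast in
theorem Fin.forall_of_add_one {p : Fin m → Prop} (z : Fin m) (hz : p z)
    (hstep : ∀ j, p j → p (j + 1)) (j : Fin m) : p j := by
  have hk : ∀ k : ℕ, p (z + k) := by
    intro k
    induction k with
    | zero => simpa using hz
    | succ k ih => simpa [add_assoc] using hstep _ ih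
  simpa using hk (j - z).val

theorem Fin.val_add_one_eq_mod (i : Fin m) : ((i + 1 : Fin m) : ℕ) = ((i : ℕ) + 1) % m := by
  rw [Fin.val_add, Fin.val_one', Nat.add_mod_mod]

theorem cycleGraph_adj {i j : Fin m} :
    (cycleGraph m).Adj i j ↔ i ≠ j ∧ (j = i + 1 ∨ i = j + 1) := by
  simp only [cycleGraph, SimpleGraph.fromRel_adj, Fin.ext_iff, Fin.val_add_one_eq_mod]

theorem cycleGraph_adj_add_one (hm : 1 < m) (j : Fin m) : (cycleGraph m).Adj j (j + 1) := by
  refine cycleGraph_adj.mpr ⟨fun h => ?_, Or.inl rfl⟩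
  have hone := congrArg Fin.val (left_eq_add.mp h)
  simp [Nat.mod_eq_of_lt hm] at hone

variable (K : Type*) [Field K] in
theorem monomial_cycleEdge_mem_edgeIdeal (hm : 1 < m) (j : Fin m) :
    monomial (single j 1 + single (j + 1) 1) (1 : K) ∈ edgeIdeal K (cycleGraph m) :=
  Ideal.subset_span ⟨j, j + 1, cycleGraph_adj_add_one hm j, by rw [X, X, monomial_mul, one_mul]⟩

theorem IsVertexCover.le_two_mul_card (hm : 1 < m) {S : Finset (Fin m)}
    (hS : IsVertexCover (cycleGraph m) S) : m ≤ 2 * S.card := by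
  classical
  have hedge : ∀ j : Fin m, 1 ≤ (if j ∈ S then 1 else 0) + (if j + 1 ∈ S then 1 else 0) := by
    intro j
    rcases hS (cycleGraph_adj_add_one hm j) with h | h <;> simp [h]
  have hshift : ∑ j : Fin m, (if j + 1 ∈ S then 1 else 0) = ∑ j : Fin m, (if j ∈ S then 1 else 0) :=
    Fintype.sum_equiv (Equiv.addRight 1) _ _ fun _ => rfl
  calc m = ∑ _ : Fin m, 1 := by simp
    _ ≤ ∑ j : Fin m, ((if j ∈ S then 1 else 0) + (if j + 1 ∈ S then 1 else 0)) :=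
      Finset.sum_le_sum fun j _ => hedge j
    _ = 2 * S.card := by
      rw [Finset.sum_add_distrib, hshift, Finset.sum_boole, Finset.filter_mem_eq_inter,
        Finset.univ_inter, Nat.cast_id, two_mul]

theorem IsVertexCover.insert_sub_one_erase {S : Finset (Fin m)} {j : Fin m}
    (hS : IsVertexCover (cycleGraph m) S) (hj : j + 1 ∈ S) :
    IsVertexCover (cycleGraph m) (insert (j - 1) (S.erase j)) :=
  hS.insert_erase fun v hv hne => by
    rcases (cycleGraph_adj.mp hv).2 with rfl | rfl
    · exact hj
    · exact absurd (add_sub_cancel_right v 1).symm hne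

theorem Fin.exists_sub_one_eq_zero_ne_zero {a : Fin m → ℕ} {z j : Fin m} (hz : a z = 0)
    (hj : a j ≠ 0) (hj1 : a (j + 1) ≠ 0) : ∃ k, a (k - 1) = 0 ∧ a k ≠ 0 ∧ a (k + 1) ≠ 0 := by
  by_contra! h
  have hcover : ∀ k, a k = 0 ∨ a (k + 1) = 0 := Fin.forall_of_add_one z (Or.inl hz) fun k hk => by
    by_cases hk1 : a (k + 1) = 0
    · exact Or.inl hk1
    · exact Or.inr (h (k + 1) (by simpa using hk.resolve_right hk1) hk1)
  rcases hcover j with h0 | h0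
  exacts [hj h0, hj1 h0]

end Cycle

section OddCycle

variable {n t : ℕ} {a : Fin (2 * n + 1) →₀ ℕ}

theorem LeCoverWeight.exists_peelable_edge (h : LeCoverWeight (cycleGraph (2 * n + 1)) (t + 1) a)
    (ht : t + 1 ≤ n) :
    ∃ j, single j 1 + single (j + 1) 1 ≤ a ∧ ∀ S, IsVertexCover (cycleGraph (2 * n + 1)) S →
      j ∈ S → j + 1 ∈ S → t + 2 ≤ ∑ i ∈ S, a i := by
  classical
  have hm : 1 < 2 * n + 1 := by omega
  by_cases hpos : ∀ i, a i ≠ 0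
  · refine ⟨0, single_add_single_le (cycleGraph_adj_add_one hm 0).ne (hpos _) (hpos _),
      fun S hS _ _ => ?_⟩
    calc t + 2 ≤ S.card := by have := hS.le_two_mul_card hm; omega
      _ = ∑ _ ∈ S, 1 := by simp
      _ ≤ ∑ i ∈ S, a i := Finset.sum_le_sum fun i _ => Nat.one_le_iff_ne_zero.mpr (hpos i)
  obtain ⟨z, hz⟩ : ∃ z, a z = 0 := by simpa using hpos
  obtain ⟨i, j, hij, hi, hj⟩ := h.exists_adj_ne_zero (Nat.succ_ne_zero t)
  obtain ⟨k, hk0, hk, hk1⟩ : ∃ k, a (k - 1) = 0 ∧ a k ≠ 0 ∧ a (k + 1) ≠ 0 := by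
    rcases (cycleGraph_adj.mp hij).2 with rfl | rfl
    exacts [Fin.exists_sub_one_eq_zero_ne_zero hz hi hj, Fin.exists_sub_one_eq_zero_ne_zero hz hj hi]
  refine ⟨k, single_add_single_le (cycleGraph_adj_add_one hm k).ne hk hk1,
    fun S hS hkS hk1S => ?_⟩
  have hS' := h _ (hS.insert_sub_one_erase hk1S)
  rw [Finset.sum_insert_of_eq_zero_if_notMem fun _ => hk0] at hS'
  have := Finset.sum_erase_add S a hkS
  omega

theorem LeCoverWeight.exists_sum_le (h : LeCoverWeight (cycleGraph (2 * n + 1)) t a)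
    (ht : t ≤ n) : ∃ l : Multiset (Fin (2 * n + 1)), Multiset.card l = t ∧
      (l.map fun j => single j 1 + single (j + 1) 1).sum ≤ a := by
  induction t generalizing a with
  | zero => exact ⟨0, rfl, by simp⟩
  | succ t ih =>
    obtain ⟨j, hle, hboth⟩ := h.exists_peelable_edge ht
    obtain ⟨l, hl, hsum⟩ := ih (h.tsub_single_add_single hle hboth) (by omega)
    refine ⟨j ::ₘ l, by rw [Multiset.card_cons, hl], ?_⟩
    rw [Multiset.map_cons, Multiset.sum_cons]
    calc _ ≤ single j 1 + single (j + 1) 1 + (a - (single j 1 + single (j + 1) 1)) :=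
          add_le_add_right hsum _
      _ = a := add_tsub_cancel_of_le hle

end OddCycle

theorem symbolicPower_eq_pow_of_le_general (K : Type*) [Field K] (n t : ℕ)
    (hn : 1 ≤ n) (ht2 : t ≤ n) :
    symbolicPower K (cycleGraph (2 * n + 1)) t
      = edgeIdeal K (cycleGraph (2 * n + 1)) ^ t := by
  refine le_antisymm (fun f hf => MvPolynomial.mem_of_forall_monomial_one_mem fun a ha => ?_)
    (edgeIdeal_pow_le_symbolicPower t)
  obtain ⟨l, rfl, hl⟩ := (leCoverWeight_of_mem_symbolicPower hf ha).exists_sum_le ht2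
  exact MvPolynomial.monomial_mem_pow_of_sum_le
    (fun j _ => monomial_cycleEdge_mem_edgeIdeal K (by omega) j) hl 1

/-- For the edge ideal of the odd cycle `C_{2n+1}`, the symbolic and ordinary
powers agree for `1 ≤ t ≤ n`. -/
theorem symbolicPower_eq_pow_of_le (K : Type*) [Field K] (n t : ℕ)
    (hn : 1 ≤ n) (ht1 : 1 ≤ t) (ht2 : t ≤ n) :
    symbolicPower K (cycleGraph (2 * n + 1)) t
      = edgeIdeal K (cycleGraph (2 * n + 1)) ^ t :=
  symbolicPower_eq_pow_of_le_general K n t hn ht2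
end
end

section
/- Let I = I(C_{2n+1}) be the edge ideal of the odd cycle C_{2n+1}, and write t = s(n+1) + d with 0 ≤ d ≤ n. Then the monomial m = x_1^{s+d} x_2^{s+d} x_3^s x_4^s ⋯ x_{2n+1}^s belongs to I^(t); in particular, I^(t) contains a nonzero element of degree (2n+1)s + 2d. -/
open MvPolynomial

noncomputable section

/-! A monomial `x^a` lies in `P_S ^ (∑_{i ∈ S} a_i)`, so it lies in `I^(t)` as soon as every
minimal vertex cover `S` has `a`-weight at least `t`. A vertex cover `S` of `C_{2n+1}` has at least
`n + 1` vertices, since every vertex lies in `S` or precedes one in `S`, and it meets the edge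
`{x_1, x_2}`; hence the given exponent has weight at least `s (n + 1) + d` on `S`. -/

lemma monomial_mem_varIdeal_pow {K : Type*} [Field K] {N : ℕ} (a : Fin N →₀ ℕ) (c : K)
    (S : Finset (Fin N)) : monomial a c ∈ varIdeal K N S ^ ∑ i ∈ S, a i := by
  classical
  have hX : ∀ i ∈ S, (X i : MvPolynomial (Fin N) K) ∈ varIdeal K N S := fun i hi =>
    Ideal.subset_span ⟨i, hi, rfl⟩
  have hS : ∏ i ∈ S, (X i : MvPolynomial (Fin N) K) ^ a i ∈ varIdeal K N S ^ ∑ i ∈ S, a i := by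
    rw [← Finset.prod_pow_eq_pow_sum]
    exact Ideal.prod_mem_prod fun i hi => Ideal.pow_mem_pow (hX i hi) _
  rw [monomial_eq, Finsupp.prod_fintype _ _ fun _ => pow_zero _, ← Finset.prod_mul_prod_compl S,
    mul_left_comm]
  exact Ideal.mul_mem_right _ _ hS

lemma monomial_mem_symbolicPower_of_le_sum {K : Type*} [Field K] {N : ℕ}
    {G : SimpleGraph (Fin N)} {t : ℕ} {a : Fin N →₀ ℕ} (c : K)
    (h : ∀ S, IsMinVertexCover G S → t ≤ ∑ i ∈ S, a i) :
    monomial a c ∈ symbolicPower K G t := by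
  simp only [symbolicPower, Ideal.mem_iInf]
  exact fun S hS => Ideal.pow_le_pow_right (h S hS) (monomial_mem_varIdeal_pow a c S)

lemma cycleGraph_adj_add_one_s13 {k : ℕ} (hk : 1 ≤ k) (i : Fin (k + 1)) :
    (cycleGraph (k + 1)).Adj i (i + 1) := by
  refine (SimpleGraph.fromRel_adj _ _ _).mpr ⟨?_, Or.inl ?_⟩
  · simp only [ne_eq, left_eq_add, Fin.one_eq_zero_iff]
    omega
  · simp [Fin.val_add]

lemma le_two_mul_card_of_isVertexCover_cycleGraph {k : ℕ} (hk : 1 ≤ k)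
    {S : Finset (Fin (k + 1))} (hS : IsVertexCover (cycleGraph (k + 1)) S) :
    k + 1 ≤ 2 * S.card := by
  classical
  have hcover : Finset.univ ⊆ S ∪ S.image (· - 1) := fun i _ => by
    rcases hS (cycleGraph_adj_add_one_s13 hk i) with h | h
    · exact Finset.mem_union_left _ h
    · exact Finset.mem_union_right _ (Finset.mem_image.mpr ⟨i + 1, h, add_sub_cancel_right i 1⟩)
  calc k + 1 = Finset.univ.card := by simp
    _ ≤ (S ∪ S.image (· - 1)).card := Finset.card_le_card hcover
    _ ≤ S.card + (S.image (· - 1)).card := Finset.card_union_le _ _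
    _ ≤ 2 * S.card := by linarith [Finset.card_image_le (s := S) (f := (· - 1))]

lemma mul_card_add_le_sum {ι : Type*} {S : Finset ι} {f : ι → ℕ} {s d : ℕ} {j : ι}
    (hj : j ∈ S) (hf : ∀ i ∈ S, s ≤ f i) (hfj : s + d ≤ f j) :
    s * S.card + d ≤ ∑ i ∈ S, f i := by
  classical
  calc s * S.card + d = ∑ i ∈ S, (s + if i = j then d else 0) := by
        simp [Finset.sum_add_distrib, hj, mul_comm]
    _ ≤ ∑ i ∈ S, f i := Finset.sum_le_sum fun i hi => by
        split_ifs with h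
        · exact h ▸ hfj
        · simpa using hf i hi

lemma sum_ite_val_lt_two {m : ℕ} (hm : 2 ≤ m) (s d : ℕ) :
    ∑ i : Fin m, (if (i : ℕ) < 2 then s + d else s) = m * s + 2 * d := by
  obtain ⟨k, rfl⟩ := Nat.exists_eq_add_of_le' hm
  rw [Fin.sum_univ_eq_sum_range (fun i => if i < 2 then s + d else s), Finset.sum_range_succ',
    Finset.sum_range_succ']
  simp [add_mul, two_mul, add_assoc, add_comm, add_left_comm]

theorem monomial_mem_symbolicPower_general (K : Type*) [Field K] (n s d : ℕ)
    (hn : 1 ≤ n) :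
    letI a : Fin (2 * n + 1) →₀ ℕ :=
      Finsupp.equivFunOnFinite.symm (fun i => if (i : ℕ) < 2 then s + d else s)
    (monomial a (1 : K)) ∈ symbolicPower K (cycleGraph (2 * n + 1)) (s * (n + 1) + d)
    ∧ (monomial a (1 : K)) ≠ 0
    ∧ (monomial a (1 : K)).totalDegree = (2 * n + 1) * s + 2 * d := by
  set a : Fin (2 * n + 1) →₀ ℕ :=
    Finsupp.equivFunOnFinite.symm (fun i => if (i : ℕ) < 2 then s + d else s)
  have ha : ∀ i, a i = if (i : ℕ) < 2 then s + d else s := fun _ => rfl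
  refine ⟨monomial_mem_symbolicPower_of_le_sum _ fun S hS => ?_, by simp [monomial_eq_zero], ?_⟩
  · have h01 : (cycleGraph (2 * n + 1)).Adj 0 1 := by
      simpa using cycleGraph_adj_add_one_s13 (k := 2 * n) (by omega) 0
    obtain ⟨j, hjS, hj⟩ : ∃ j ∈ S, (j : ℕ) < 2 := (hS.1 h01).elim
      (fun h => ⟨0, h, by simp⟩) (fun h => ⟨1, h, by simpa using Nat.mod_le 1 (2 * n + 1)⟩)
    have hcard := le_two_mul_card_of_isVertexCover_cycleGraph (k := 2 * n) (by omega) hS.1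
    calc s * (n + 1) + d ≤ s * S.card + d := by gcongr; omega
      _ ≤ ∑ i ∈ S, a i := mul_card_add_le_sum hjS (fun i _ => by rw [ha]; split_ifs <;> omega)
          (by rw [ha, if_pos hj])
  · rw [totalDegree_monomial _ one_ne_zero, Finsupp.sum_fintype _ _ fun _ => rfl]
    exact sum_ite_val_lt_two (by omega) s d

/-- Writing `t = s(n+1) + d` with `0 ≤ d ≤ n`, the monomial
`x_1^{s+d} x_2^{s+d} x_3^s ⋯ x_{2n+1}^s` lies in `I^(t)`; in particular `I^(t)`
contains a nonzero element of degree `(2n+1)s + 2d`. -/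
theorem monomial_mem_symbolicPower (K : Type*) [Field K] (n s d : ℕ)
    (hn : 1 ≤ n) (hd : d ≤ n) :
    letI a : Fin (2 * n + 1) →₀ ℕ :=
      Finsupp.equivFunOnFinite.symm (fun i => if (i : ℕ) < 2 then s + d else s)
    (monomial a (1 : K)) ∈ symbolicPower K (cycleGraph (2 * n + 1)) (s * (n + 1) + d)
    ∧ (monomial a (1 : K)) ≠ 0
    ∧ (monomial a (1 : K)).totalDegree = (2 * n + 1) * s + 2 * d :=
  monomial_mem_symbolicPower_general K n s d hn
end
end
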